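/- arXiv:1510.01316 — 2 statements merged into one kernel-verified Lean document; each statement's English description precedes it below -/
import Mathlib

section
/- Every CA-AG-band is a commutative semigroup; that is, if a magma S satisfies the left invertive law, cyclic associativity, and every element is idempotent (a·a = a for all a), then S is commutative (a·b = b·a for all a,b) and associative ((a·b)·c = a·(b·c) for all a,b,c). -/
theorem mul_comm_of_cyclic_assoc_of_idem {S : Type*} [Mul S]
    (ca : ∀ a b c : S, a * (b * c) = c * (a * b)) (idem : ∀ a : S, a * a = a) (a b : S) :
    a * b = b * a :=
  calc a * b = (a * a) * (b * b) := by rw [idem, idem]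
    _ = b * (b * (a * a)) := (ca b b (a * a)).symm
    _ = b * (a * (b * a)) := by rw [ca b a a]
    _ = (b * a) * (b * a) := ca b a (b * a)
    _ = b * a := idem _

theorem mul_assoc_of_left_invertive_of_comm {S : Type*} [Mul S]
    (li : ∀ a b c : S, (a * b) * c = (c * b) * a) (comm : ∀ a b : S, a * b = b * a)
    (a b c : S) : (a * b) * c = a * (b * c) :=
  calc (a * b) * c = (c * b) * a := li a b c
    _ = a * (c * b) := comm _ _
    _ = a * (b * c) := by rw [comm c b]

theorem CA_AG_band_is_commutative_semigroup {S : Type*} [Mul S]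
    (li : ∀ a b c : S, (a * b) * c = (c * b) * a)
    (ca : ∀ a b c : S, a * (b * c) = c * (a * b))
    (idem : ∀ a : S, a * a = a) :
    (∀ a b : S, a * b = b * a) ∧
    (∀ a b c : S, (a * b) * c = a * (b * c)) :=
  have comm := mul_comm_of_cyclic_assoc_of_idem ca idem
  ⟨comm, mul_assoc_of_left_invertive_of_comm li comm⟩
end

section
/- Every AG*-band is a CA-AG-groupoid; that is, if a magma S satisfies the left invertive law, the AG* identity (a·b)·c = b·(a·c), and every element is idempotent (a·a = a for all a), then S satisfies cyclic associativity a·(b·c) = c·(a·b) for all a,b,c. -/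
/-! Idempotence and the AG* law give `a * (a * b) = a * b`, hence
`a * b = (a * b) * (a * b) = b * (a * b) = (a * b) * b = (b * b) * a = b * a`.
A commutative AG-groupoid is a commutative semigroup, and there cyclic associativity is
immediate. -/

section AGStarBand

variable {S : Type*} [Mul S]

theorem mul_mul_self_left_of_idem (ags : ∀ a b c : S, (a * b) * c = b * (a * c))
    (idem : ∀ a : S, a * a = a) (a b : S) : a * (a * b) = a * b := by
  rw [← ags, idem]

theorem mul_comm_of_ags_of_idem (li : ∀ a b c : S, (a * b) * c = (c * b) * a)
    (ags : ∀ a b c : S, (a * b) * c = b * (a * c)) (idem : ∀ a : S, a * a = a) (a b : S) :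
    a * b = b * a :=
  calc a * b = (a * b) * (a * b) := (idem _).symm
    _ = b * (a * (a * b)) := ags _ _ _
    _ = b * (a * b) := by rw [mul_mul_self_left_of_idem ags idem]
    _ = (a * b) * b := (ags _ _ _).symm
    _ = (b * b) * a := li _ _ _
    _ = b * a := by rw [idem]

theorem mul_assoc_of_li_of_comm (li : ∀ a b c : S, (a * b) * c = (c * b) * a)
    (comm : ∀ a b : S, a * b = b * a) (a b c : S) : (a * b) * c = a * (b * c) := by
  rw [li, comm, comm c]

end AGStarBand

theorem AG_star_band_is_CA {S : Type*} [Mul S]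
    (li : ∀ a b c : S, (a * b) * c = (c * b) * a)
    (ags : ∀ a b c : S, (a * b) * c = b * (a * c))
    (idem : ∀ a : S, a * a = a) :
    ∀ a b c : S, a * (b * c) = c * (a * b) := by
  intro a b c
  have comm := mul_comm_of_ags_of_idem li ags idem
  rw [← mul_assoc_of_li_of_comm li comm, comm]
end
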